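/- arXiv:2407.14623 — 2 statements merged into one kernel-verified Lean document; each statement's English description precedes it below -/
import Mathlib

section
/- A rule R satisfies scale invariance, downstream impartiality, upstream invariance, and equal treatment of equal source inflows if and only if there is λ ∈ [0,1] with R(e) = λ R^NT(e) + (1-λ) R^EFT(e) for all e, where R^NT(e) = e is the no-transfer rule and R^EFT is the egalitarian full-transfer rule. -/
open Finset

/-- Nonnegative inflow profile: the domain `ℝ^n_+`. -/
def Nonneg (n : ℕ) (e : Fin n → ℝ) : Prop := ∀ i, 0 ≤ e i

/-- A rule maps each inflow profile to a nonnegative, feasible, non-wasteful allocation. -/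
def IsRule (n : ℕ) (R : (Fin n → ℝ) → (Fin n → ℝ)) : Prop :=
  ∀ e : Fin n → ℝ, Nonneg n e →
    (∀ i, 0 ≤ R e i) ∧
    (∀ k : Fin n, ∑ i ∈ Finset.Iic k, R e i ≤ ∑ i ∈ Finset.Iic k, e i) ∧
    (∑ i, R e i = ∑ i, e i)

/-- Scale invariance. -/
def ScaleInvariant (n : ℕ) (R : (Fin n → ℝ) → (Fin n → ℝ)) : Prop :=
  ∀ e : Fin n → ℝ, Nonneg n e → ∀ γ : ℝ, 0 ≤ γ →
    ∀ i, R (fun j => γ * e j) i = γ * R e i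

/-- Upstream invariance. -/
def UpstreamInvariant (n : ℕ) (R : (Fin n → ℝ) → (Fin n → ℝ)) : Prop :=
  ∀ e e' : Fin n → ℝ, Nonneg n e → Nonneg n e' →
    ∀ i : Fin n, e i < e' i → (∀ j, j ≠ i → e j = e' j) →
      ∀ k, k < i → R e k = R e' k

/-- Downstream impartiality. -/
def DownstreamImpartial (n : ℕ) (R : (Fin n → ℝ) → (Fin n → ℝ)) : Prop :=
  ∀ e e' : Fin n → ℝ, Nonneg n e → Nonneg n e' →
    ∀ i : Fin n, e i < e' i → (∀ j, j ≠ i → e j = e' j) →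
      (∀ k l, i < k → i < l → e k = e l) →
      ∀ k l, i < k → i < l → R e' k - R e k = R e' l - R e l

/-- Order preservation. -/
def OrderPreserving (n : ℕ) (R : (Fin n → ℝ) → (Fin n → ℝ)) : Prop :=
  ∀ e : Fin n → ℝ, Nonneg n e → ∀ i j : Fin n, i < j → e j ≤ e i → R e j ≤ R e i

/-- Balance: when a single agent `i` (not the last one) has the only positive inflow,
`i` receives the average of the amounts received by the strictly downstream agents. -/
def IsBalanced (n : ℕ) (R : (Fin n → ℝ) → (Fin n → ℝ)) : Prop :=
  ∀ e : Fin n → ℝ, Nonneg n e → ∀ i : Fin n, (i : ℕ) < n - 1 → 0 < e i →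
    (∀ j, j ≠ i → e j = 0) →
    R e i = (1 / ((n : ℝ) - 1 - (i : ℕ))) * ∑ k ∈ Finset.Ioi i, R e k

/-- Progressivity. -/
def Progressive (n : ℕ) (R : (Fin n → ℝ) → (Fin n → ℝ)) : Prop :=
  ∀ e : Fin n → ℝ, Nonneg n e → ∀ i : Fin n, (i : ℕ) < n - 1 → 0 < e i →
    (∀ j, j ≠ i → e j = 0) →
    R e i ≤ (1 / ((n : ℝ) - 1 - (i : ℕ))) * ∑ k ∈ Finset.Ioi i, R e k

/-- Regressivity. -/
def Regressive (n : ℕ) (R : (Fin n → ℝ) → (Fin n → ℝ)) : Prop :=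
  ∀ e : Fin n → ℝ, Nonneg n e → ∀ i : Fin n, (i : ℕ) < n - 1 → 0 < e i →
    (∀ j, j ≠ i → e j = 0) →
    R e i ≥ (1 / ((n : ℝ) - 1 - (i : ℕ))) * ∑ k ∈ Finset.Ioi i, R e k

/-- Equal treatment of equal source inflows: here `s` (resp. `s'`) is the source of `e`
(resp. `e'`), i.e. the smallest index among the first `n-1` agents with positive inflow. -/
def EqualTreatmentOfEqualSourceInflows (n : ℕ) (R : (Fin n → ℝ) → (Fin n → ℝ)) : Prop :=
  ∀ e e' : Fin n → ℝ, Nonneg n e → Nonneg n e' →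
    ∀ s s' : Fin n, (s : ℕ) < n - 1 → (s' : ℕ) < n - 1 →
      0 < e s → 0 < e' s' →
      (∀ j, j < s → e j = 0) → (∀ j, j < s' → e' j = 0) →
      e s = e' s' → R e s = R e' s'

/-- Equal treatment of equal upstream total inflow. -/
def EqualTreatmentOfEqualUpstreamTotalInflow (n : ℕ) (R : (Fin n → ℝ) → (Fin n → ℝ)) : Prop :=
  ∀ e e' : Fin n → ℝ, Nonneg n e → Nonneg n e' →
    ∀ i : Fin n, e i = e' i →
      (∑ j ∈ Finset.Iio i, e j) = (∑ j ∈ Finset.Iio i, e' j) →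
      R e i = R e' i

/-- The Shapley rule: `R^Sh_i(e) = Σ_{j ≤ i} e_j / (n - j + 1)` (with 1-based indices). -/
noncomputable def Sh (n : ℕ) (e : Fin n → ℝ) (i : Fin n) : ℝ :=
  ∑ j ∈ Finset.Iic i, e j / ((n : ℝ) - (j : ℕ))

/-- The no-transfer rule. -/
def NT (n : ℕ) (e : Fin n → ℝ) (i : Fin n) : ℝ := e i

/-- The egalitarian full-transfer rule: `R^EFT_i(e) = Σ_{j < i} e_j / (n - j)` for `i < n`,
and the last agent additionally keeps her own inflow. -/
noncomputable def EFT (n : ℕ) (e : Fin n → ℝ) (i : Fin n) : ℝ :=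
  (∑ j ∈ Finset.Iio i, e j / ((n : ℝ) - 1 - (j : ℕ))) +
    (if (i : ℕ) = n - 1 then e i else 0)

/-- The egalitarian partial-transfer rule:
`R^EPT_i(e) = [1 - (n - i)/(n - 1)] e_i + (1/(n-1)) Σ_{k < i} e_k` (1-based indices). -/
noncomputable def EPT (n : ℕ) (e : Fin n → ℝ) (i : Fin n) : ℝ :=
  (1 - ((n : ℝ) - 1 - (i : ℕ)) / ((n : ℝ) - 1)) * e i +
    (1 / ((n : ℝ) - 1)) * ∑ j ∈ Finset.Iio i, e j

/-- The rule `R^α`: agent `k` keeps a fraction `α k` of her inflow and transfers the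
rest equally among the agents strictly downstream. -/
noncomputable def Ralpha (n : ℕ) (α : Fin n → ℝ) (e : Fin n → ℝ) (i : Fin n) : ℝ :=
  α i * e i + ∑ k ∈ Finset.Iio i, (1 - α k) * e k / ((n : ℝ) - 1 - (k : ℕ))

/-- Admissible parameter vectors: `α ∈ [0,1]^{n-1}` extended by `α_n = 1`. -/
def AlphaOK (n : ℕ) (α : Fin n → ℝ) : Prop :=
  (∀ i, 0 ≤ α i ∧ α i ≤ 1) ∧ (∀ i : Fin n, (i : ℕ) = n - 1 → α i = 1)

/-!
The compromise rules satisfy the four axioms by direct computation. Conversely, scale invariance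
and equal treatment of equal source inflows force every source to keep the same share
`λ = R(δ₀)₀` of its inflow, which is also what `λ R^NT + (1-λ) R^EFT` gives it.

Two non-wasteful, upstream invariant, downstream impartial rules that agree at sources agree
everywhere. Indeed, changing the inflow of agent `m` in a profile that is constant after `m`
leaves the allocations upstream of `m` unchanged and moves all allocations downstream of `m` by
a common amount, which non-wastefulness pins down from the change at `m`. The zero profile,
then the profiles `(0,…,0,c,…,c)`, then `(e₀,…,e_{m-1},c,…,c)` are reached by such single
changes, and at each step the allocation of the changed agent is already known: as a source, by
non-wastefulness when it is the last agent, or by upstream invariance from an earlier profile.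
-/

section

variable {n : ℕ}

def NonWasteful (n : ℕ) (F : (Fin n → ℝ) → (Fin n → ℝ)) : Prop :=
  ∀ e : Fin n → ℝ, Nonneg n e → ∑ i, F e i = ∑ i, e i

lemma IsRule.nonWasteful {R : (Fin n → ℝ) → (Fin n → ℝ)} (hR : IsRule n R) :
    NonWasteful n R :=
  fun e he => (hR e he).2.2

lemma IsRule.apply_eq_zero_of_forall_le {R : (Fin n → ℝ) → (Fin n → ℝ)} (hR : IsRule n R)
    {e : Fin n → ℝ} (he : Nonneg n e) {k : Fin n} (h : ∀ j ≤ k, e j = 0) : R e k = 0 := by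
  have hsum : ∑ j ∈ Iic k, R e j = 0 := by
    refine le_antisymm ?_ (sum_nonneg fun j _ => (hR e he).1 j)
    calc ∑ j ∈ Iic k, R e j ≤ ∑ j ∈ Iic k, e j := (hR e he).2.1 k
      _ = 0 := sum_eq_zero fun j hj => h j (mem_Iic.1 hj)
  exact (sum_eq_zero_iff_of_nonneg fun j _ => (hR e he).1 j).1 hsum k (mem_Iic.2 le_rfl)

lemma sum_univ_eq_sum_Iio_add_add_sum_Ioi (f : Fin n → ℝ) (m : Fin n) :
    ∑ i, f i = ∑ i ∈ Iio m, f i + f m + ∑ i ∈ Ioi m, f i := by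
  rw [← sum_add_sum_compl {m}, ← Ioi_disjUnion_Iio, sum_disjUnion, sum_singleton]
  ring

lemma cast_card_Ioi (i : Fin n) : ((#(Ioi i) : ℕ) : ℝ) = (n : ℝ) - 1 - i := by
  have := i.isLt
  rw [Fin.card_Ioi, Nat.cast_sub (by omega), Nat.cast_sub (by omega)]
  push_cast; ring

lemma eq_of_agree_off {V W : Fin n → ℝ} {m : Fin n} (hoff : ∀ j ≠ m, V j = W j)
    (hm : V m = W m) : V = W :=
  funext fun j => if hj : j = m then hj ▸ hm else hoff j hj

section Properties

variable {F : (Fin n → ℝ) → (Fin n → ℝ)} {V W : Fin n → ℝ} {m : Fin n}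

lemma UpstreamInvariant.apply_eq_of_agree_off (hUI : UpstreamInvariant n F)
    (hV : Nonneg n V) (hW : Nonneg n W) (hoff : ∀ j ≠ m, V j = W j) {k : Fin n} (hk : k < m) :
    F V k = F W k := by
  rcases lt_trichotomy (V m) (W m) with h | h | h
  · exact hUI V W hV hW m h hoff k hk
  · rw [eq_of_agree_off hoff h]
  · exact (hUI W V hW hV m h (fun j hj => (hoff j hj).symm) k hk).symm

lemma UpstreamInvariant.apply_eq_of_forall_le (hUI : UpstreamInvariant n F)
    {e e' : Fin n → ℝ} (he : Nonneg n e) (he' : Nonneg n e') {k : Fin n}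
    (h : ∀ j ≤ k, e j = e' j) : F e k = F e' k := by
  suffices key : ∀ D : Finset (Fin n), ∀ e, Nonneg n e → (∀ j ∉ D, e j = e' j) →
      (∀ j ∈ D, k < j) → F e k = F e' k by
    exact key (Ioi k) e he (fun j hj => h j (not_lt.1 (by simpa using hj))) fun j => mem_Ioi.1
  intro D
  induction D using Finset.induction_on with
  | empty => exact fun e _ hoff _ => by rw [funext fun j => hoff j (notMem_empty j)]
  | insert i D _ ih =>
    intro e he hoff hD
    have hupd : Nonneg n (Function.update e i (e' i)) := fun j => by
      rcases eq_or_ne j i with rfl | hj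
      · simpa using he' j
      · simpa [hj] using he j
    calc F e k = F (Function.update e i (e' i)) k :=
          hUI.apply_eq_of_agree_off he hupd (fun j hj => by simp [hj]) (hD i (mem_insert_self i D))
      _ = F e' k := by
        refine ih _ hupd (fun j hj => ?_) fun j hj => hD j (mem_insert_of_mem hj)
        rcases eq_or_ne j i with rfl | hji
        · simp
        · simpa [hji] using hoff j (by simp [hji, hj])

lemma DownstreamImpartial.sub_eq_sub (hDI : DownstreamImpartial n F)
    (hV : Nonneg n V) (hW : Nonneg n W) (hoff : ∀ j ≠ m, V j = W j)
    (htail : ∀ a b, m < a → m < b → V a = V b) {k l : Fin n} (hk : m < k) (hl : m < l) :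
    F W k - F V k = F W l - F V l := by
  rcases lt_trichotomy (V m) (W m) with h | h | h
  · exact hDI V W hV hW m h hoff htail k l hk hl
  · rw [eq_of_agree_off hoff h]; ring
  · have := hDI W V hW hV m h (fun j hj => (hoff j hj).symm)
      (fun a b ha hb => by rw [← hoff a ha.ne', ← hoff b hb.ne']; exact htail a b ha hb)
      k l hk hl
    linarith

lemma NonWasteful.mul_sub_eq (hUI : UpstreamInvariant n F) (hDI : DownstreamImpartial n F)
    (hNW : NonWasteful n F) (hV : Nonneg n V) (hW : Nonneg n W) (hoff : ∀ j ≠ m, V j = W j)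
    (htail : ∀ a b, m < a → m < b → V a = V b) {k : Fin n} (hk : m < k) :
    ((n : ℝ) - 1 - m) * (F W k - F V k) = W m - V m - (F W m - F V m) := by
  have hsum : ∑ i, (F W i - F V i) = W m - V m := by
    rw [sum_sub_distrib, hNW W hW, hNW V hV, ← sum_sub_distrib,
      sum_eq_single m (fun j _ hj => by rw [hoff j hj, sub_self]) (by simp)]
  rw [sum_univ_eq_sum_Iio_add_add_sum_Ioi _ m,
    sum_eq_zero fun j hj => by rw [hUI.apply_eq_of_agree_off hV hW hoff (mem_Iio.1 hj), sub_self],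
    sum_congr rfl fun j hj => hDI.sub_eq_sub hV hW hoff htail (mem_Ioi.1 hj) hk,
    sum_const, nsmul_eq_mul, cast_card_Ioi] at hsum
  linarith

end Properties

def constFrom (m : ℕ) (c : ℝ) (e : Fin n → ℝ) : Fin n → ℝ :=
  fun i => if (i : ℕ) < m then e i else c

section ConstFrom

variable {c : ℝ} {e : Fin n → ℝ}

lemma Nonneg.constFrom (he : Nonneg n e) (m : ℕ) (hc : 0 ≤ c) : Nonneg n (constFrom m c e) :=
  fun i => by unfold _root_.constFrom; split_ifs <;> simp [he i, hc]

lemma constFrom_self : constFrom n c e = e :=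
  funext fun i => if_pos i.isLt

lemma constFrom_succ_agree_off (m : Fin n) :
    ∀ j ≠ m, constFrom m c e j = constFrom (m + 1) c e j := by
  intro j hj
  have : (j : ℕ) ≠ m := Fin.val_ne_of_ne hj
  unfold constFrom
  split_ifs <;> first | rfl | omega

lemma constFrom_tail {m : ℕ} (k : Fin n) (hk : m ≤ (k : ℕ) + 1) :
    ∀ a b, k < a → k < b → constFrom m c e a = constFrom m c e b := by
  intro a b ha hb
  rw [Fin.lt_def] at ha hb
  unfold constFrom
  rw [if_neg (by omega), if_neg (by omega)]

lemma constFrom_succ_apply_of_le (m : Fin n) {j : Fin n} (hj : j ≤ m) :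
    constFrom (m + 1) c e j = constFrom m (e m) e j := by
  rw [Fin.le_def] at hj
  unfold constFrom
  split_ifs with h₁ h₂ <;> first | rfl | omega | rw [Fin.ext (by omega : (j : ℕ) = m)]

end ConstFrom

def AgreeAtSources (n : ℕ) (F G : (Fin n → ℝ) → (Fin n → ℝ)) : Prop :=
  ∀ e, Nonneg n e → ∀ s : Fin n, (s : ℕ) < n - 1 → (∀ j < s, e j = 0) → F e s = G e s

section Uniqueness

variable {F G : (Fin n → ℝ) → (Fin n → ℝ)}

lemma apply_eq_of_forall_ne (hFNW : NonWasteful n F) (hGNW : NonWasteful n G)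
    {e : Fin n → ℝ} (he : Nonneg n e) {m : Fin n} (h : ∀ k ≠ m, F e k = G e k) :
    F e m = G e m := by
  have := (hFNW e he).trans (hGNW e he).symm
  rwa [← add_sum_erase _ _ (mem_univ m), ← add_sum_erase _ _ (mem_univ m),
    sum_congr rfl fun k hk => h k (ne_of_mem_erase hk), add_left_inj] at this

lemma eq_of_eq_of_agree_off
    (hFUI : UpstreamInvariant n F) (hFDI : DownstreamImpartial n F) (hFNW : NonWasteful n F)
    (hGUI : UpstreamInvariant n G) (hGDI : DownstreamImpartial n G) (hGNW : NonWasteful n G)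
    {V W : Fin n → ℝ} (hV : Nonneg n V) (hW : Nonneg n W) {m : Fin n}
    (hoff : ∀ j ≠ m, V j = W j) (htail : ∀ a b, m < a → m < b → V a = V b)
    (hVeq : F V = G V) (hm : (m : ℕ) < n - 1 → F W m = G W m) : F W = G W := by
  have hlt : ∀ k < m, F W k = G W k := fun k hk => by
    rw [← hFUI.apply_eq_of_agree_off hV hW hoff hk, ← hGUI.apply_eq_of_agree_off hV hW hoff hk,
      hVeq]
  have hgt : ∀ k, m < k → F W k = G W k := fun k hk => by
    have hpos : (0 : ℝ) < n - 1 - m := by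
      have : ((m : ℕ) + 1 : ℝ) < n := by exact_mod_cast (show (m : ℕ) + 1 < n by omega)
      linarith
    have hF := hFNW.mul_sub_eq hFUI hFDI hV hW hoff htail hk
    have hG := hGNW.mul_sub_eq hGUI hGDI hV hW hoff htail hk
    have hm' : F W m = G W m := hm (by omega)
    rw [hm', hVeq] at hF
    linarith [mul_left_cancel₀ hpos.ne' (hF.trans hG.symm)]
  funext k
  rcases lt_trichotomy k m with hk | rfl | hk
  · exact hlt k hk
  · exact apply_eq_of_forall_ne hFNW hGNW hW fun j hj => hj.lt_or_gt.elim (hlt j) (hgt j)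
  · exact hgt k hk

lemma eq_at_constFrom_zero (hFUI : UpstreamInvariant n F) (hFDI : DownstreamImpartial n F)
    (hFNW : NonWasteful n F) (hGUI : UpstreamInvariant n G) (hGDI : DownstreamImpartial n G)
    (hGNW : NonWasteful n G)
    (hsrc : AgreeAtSources n F G)
    {j : ℕ} (hj : j ≤ n) {c : ℝ} (hc : 0 ≤ c) :
    F (constFrom j c 0) = G (constFrom j c 0) := by
  have h0 : Nonneg n (0 : Fin n → ℝ) := fun _ => le_rfl
  induction hj using Nat.decreasingInduction with
  | self =>
    have hlt : ∀ k : Fin n, (k : ℕ) < n - 1 → F 0 k = G 0 k :=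
      fun k hk => hsrc 0 h0 k hk fun _ _ => rfl
    rw [constFrom_self]
    funext k
    by_cases hk : (k : ℕ) < n - 1
    · exact hlt k hk
    · exact apply_eq_of_forall_ne hFNW hGNW h0 fun i hi => hlt i (by
        have := Fin.val_ne_of_ne hi; omega)
  | of_succ j hj ih =>
    refine eq_of_eq_of_agree_off (m := ⟨j, hj⟩) hFUI hFDI hFNW hGUI hGDI hGNW
      (h0.constFrom _ hc) (h0.constFrom _ hc) (fun i hi => (constFrom_succ_agree_off _ i hi).symm)
      (constFrom_tail _ le_rfl) ih fun hj' => hsrc _ (h0.constFrom _ hc) _ hj' fun i hi => ?_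
    exact if_pos (Fin.lt_def.1 hi)

lemma eq_at_constFrom (hFUI : UpstreamInvariant n F) (hFDI : DownstreamImpartial n F)
    (hFNW : NonWasteful n F) (hGUI : UpstreamInvariant n G) (hGDI : DownstreamImpartial n G)
    (hGNW : NonWasteful n G)
    (hsrc : AgreeAtSources n F G)
    {e : Fin n → ℝ} (he : Nonneg n e) {m : ℕ} (hm : m ≤ n) {c : ℝ} (hc : 0 ≤ c) :
    F (constFrom m c e) = G (constFrom m c e) := by
  induction m generalizing c with
  | zero =>
    exact eq_at_constFrom_zero hFUI hFDI hFNW hGUI hGDI hGNW hsrc (Nat.zero_le n) hc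
  | succ m ih =>
    set mF : Fin n := ⟨m, hm⟩
    have hprefix {H : (Fin n → ℝ) → (Fin n → ℝ)} (hH : UpstreamInvariant n H) {c' : ℝ}
        (hc' : 0 ≤ c') : H (constFrom (m + 1) c' e) mF = H (constFrom m (e mF) e) mF :=
      hH.apply_eq_of_forall_le (he.constFrom _ hc') (he.constFrom _ (he mF))
        fun j hj => constFrom_succ_apply_of_le mF hj
    refine eq_of_eq_of_agree_off (m := mF) hFUI hFDI hFNW hGUI hGDI hGNW
      (he.constFrom _ hc) (he.constFrom _ hc) (constFrom_succ_agree_off mF)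
      (constFrom_tail mF (Nat.le_succ m)) (ih (by omega) hc) fun _ => ?_
    rw [hprefix hFUI hc, hprefix hGUI hc, ih (by omega) (he mF)]

theorem eq_of_forall_source_eq (hFUI : UpstreamInvariant n F) (hFDI : DownstreamImpartial n F)
    (hFNW : NonWasteful n F) (hGUI : UpstreamInvariant n G) (hGDI : DownstreamImpartial n G)
    (hGNW : NonWasteful n G)
    (hsrc : AgreeAtSources n F G)
    {e : Fin n → ℝ} (he : Nonneg n e) : F e = G e := by
  rw [← constFrom_self (c := 0) (e := e)]
  exact eq_at_constFrom hFUI hFDI hFNW hGUI hGDI hGNW hsrc he le_rfl le_rfl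

end Uniqueness

noncomputable def compromise (n : ℕ) (l : ℝ) (e : Fin n → ℝ) (i : Fin n) : ℝ :=
  l * NT n e i + (1 - l) * EFT n e i

section Compromise

variable {e e' : Fin n → ℝ}

lemma EFT_congr {k : Fin n} (h : ∀ j ≤ k, e j = e' j) : EFT n e k = EFT n e' k := by
  unfold EFT
  rw [h k le_rfl, sum_congr rfl fun j hj => by rw [h j (mem_Iio.1 hj).le]]

lemma EFT_sub_EFT {i k : Fin n} (hoff : ∀ j ≠ i, e j = e' j) (hk : i < k) :
    EFT n e' k - EFT n e k = (e' i - e i) / ((n : ℝ) - 1 - i) := by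
  unfold EFT
  rw [hoff k hk.ne', add_sub_add_right_eq_sub, ← sum_sub_distrib,
    sum_eq_single i (fun j _ hj => by rw [hoff j hj, sub_self]) (by simp [hk]), sub_div]

lemma EFT_const_mul (γ : ℝ) (i : Fin n) : EFT n (fun j => γ * e j) i = γ * EFT n e i := by
  unfold EFT
  rw [mul_add, mul_sum, mul_ite, mul_zero]
  simp_rw [mul_div_assoc]

lemma EFT_eq_zero {s : Fin n} (hs : (s : ℕ) < n - 1) (h : ∀ j < s, e j = 0) :
    EFT n e s = 0 := by
  unfold EFT
  rw [sum_eq_zero fun j hj => by rw [h j (mem_Iio.1 hj), zero_div], if_neg hs.ne, add_zero]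

lemma sum_EFT : ∑ i, EFT n e i = ∑ i, e i := by
  have hswap : ∑ i, ∑ j ∈ Iio i, e j / ((n : ℝ) - 1 - j)
      = ∑ j, ((#(Ioi j) : ℕ) : ℝ) * (e j / ((n : ℝ) - 1 - j)) := by
    rw [sum_comm' (t' := univ) (s' := Ioi) (fun i j => by simp)]
    simp only [sum_const, nsmul_eq_mul]
  unfold EFT
  rw [sum_add_distrib, hswap, ← sum_add_distrib]
  refine sum_congr rfl fun j _ => ?_
  rw [cast_card_Ioi]
  split_ifs with hj
  · rw [hj, show (n : ℝ) - 1 - ↑(n - 1) = 0 by rw [Nat.cast_sub (by omega)]; simp]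
    ring
  · have : (n : ℝ) - 1 - j ≠ 0 := by
      have : ((j : ℕ) + 1 : ℝ) < n := by exact_mod_cast (show (j : ℕ) + 1 < n by omega)
      linarith
    field_simp
    ring

variable (l : ℝ)

lemma upstreamInvariant_compromise : UpstreamInvariant n (compromise n l) :=
  fun e e' _ _ i _ hoff k hk => by
    have h : ∀ j ≤ k, e j = e' j := fun j hj => hoff j (hj.trans_lt hk).ne
    simp only [compromise, NT, h k le_rfl, EFT_congr h]

lemma downstreamImpartial_compromise : DownstreamImpartial n (compromise n l) :=
  fun e e' _ _ i _ hoff _ k k' hk hk' => by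
    have hsub : ∀ k, i < k → compromise n l e' k - compromise n l e k
        = (1 - l) * ((e' i - e i) / ((n : ℝ) - 1 - i)) := fun k hk => by
      simp only [compromise, NT, hoff k hk.ne', ← EFT_sub_EFT hoff hk]
      ring
    rw [hsub k hk, hsub k' hk']

lemma nonWasteful_compromise : NonWasteful n (compromise n l) :=
  fun e _ => by
    simp only [compromise, NT, sum_add_distrib, ← mul_sum, sum_EFT]
    ring

lemma scaleInvariant_compromise : ScaleInvariant n (compromise n l) :=
  fun e _ γ _ i => by
    simp only [compromise, NT, EFT_const_mul]
    ring

lemma compromise_apply_source {s : Fin n} (hs : (s : ℕ) < n - 1) (h : ∀ j < s, e j = 0) :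
    compromise n l e s = l * e s := by
  simp only [compromise, NT, EFT_eq_zero hs h, mul_zero, add_zero]

lemma equalTreatment_compromise : EqualTreatmentOfEqualSourceInflows n (compromise n l) :=
  fun e e' _ _ s s' hs hs' _ _ h h' heq => by
    rw [compromise_apply_source l hs h, compromise_apply_source l hs' h', heq]

end Compromise

lemma exists_apply_source_eq_mul (hn : 2 ≤ n) {R : (Fin n → ℝ) → (Fin n → ℝ)}
    (hR : IsRule n R) (hSI : ScaleInvariant n R) (hET : EqualTreatmentOfEqualSourceInflows n R) :
    ∃ l : ℝ, 0 ≤ l ∧ l ≤ 1 ∧ ∀ e, Nonneg n e → ∀ s : Fin n, (s : ℕ) < n - 1 →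
      (∀ j < s, e j = 0) → R e s = l * e s := by
  set z : Fin n := ⟨0, by omega⟩
  set δ : Fin n → ℝ := Pi.single z 1
  have hδ : Nonneg n δ := fun i => by by_cases h : i = z <;> simp [δ, h]
  have hδz : δ z = 1 := Pi.single_eq_same z 1
  refine ⟨R δ z, (hR δ hδ).1 z, ?_, fun e he s hs h => ?_⟩
  · have hIic : Iic z = {z} := by ext i; simp [z, Fin.ext_iff, Fin.le_def]
    simpa [hIic, hδz] using (hR δ hδ).2.1 z
  rcases (he s).eq_or_lt with h0 | hpos
  · rw [← h0, mul_zero]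
    exact hR.apply_eq_zero_of_forall_le he fun j hj => hj.lt_or_eq.elim (h j) (· ▸ h0.symm)
  set e' : Fin n → ℝ := fun j => (e s)⁻¹ * e j
  have he' : Nonneg n e' := fun j => mul_nonneg (inv_nonneg.2 hpos.le) (he j)
  have he's : e' s = 1 := inv_mul_cancel₀ hpos.ne'
  have hscale : R e s = e s * R e' s := by
    have := hSI e' he' (e s) hpos.le s
    simp only [e', ← mul_assoc, mul_inv_cancel₀ hpos.ne', one_mul] at this
    exact this
  have hsame : R e' s = R δ z :=
    hET e' δ he' hδ s z hs (by simp [z]; omega) (by rw [he's]; exact one_pos)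
      (by rw [hδz]; exact one_pos) (fun j hj => by simp [e', h j hj])
      (fun j hj => absurd (Fin.lt_def.1 hj) (Nat.not_lt_zero _)) (he's.trans hδz.symm)
  rw [hscale, hsame, mul_comm]

end

/-- Theorem 2 in the paper: scale invariance, downstream impartiality,
upstream invariance and equal treatment of equal source inflows characterize the
compromise rules `λ R^NT + (1-λ) R^EFT`. -/
theorem compromise_characterization (n : ℕ) (hn : 2 ≤ n)
    (R : (Fin n → ℝ) → (Fin n → ℝ)) (hR : IsRule n R) :
    (ScaleInvariant n R ∧ DownstreamImpartial n R ∧ UpstreamInvariant n R ∧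
      EqualTreatmentOfEqualSourceInflows n R) ↔
    (∃ l : ℝ, 0 ≤ l ∧ l ≤ 1 ∧
      ∀ e : Fin n → ℝ, Nonneg n e → ∀ i, R e i = l * NT n e i + (1 - l) * EFT n e i) := by
  constructor
  · rintro ⟨hSI, hDI, hUI, hET⟩
    obtain ⟨l, hl0, hl1, hsrc⟩ := exists_apply_source_eq_mul hn hR hSI hET
    refine ⟨l, hl0, hl1, fun e he => congrFun ?_⟩
    refine eq_of_forall_source_eq hUI hDI hR.nonWasteful (upstreamInvariant_compromise l)
      (downstreamImpartial_compromise l) (nonWasteful_compromise l) (fun e he s hs h => ?_) he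
    rw [hsrc e he s hs h, compromise_apply_source l hs h]
  · rintro ⟨l, -, -, hRl⟩
    have hRc : ∀ e, Nonneg n e → R e = compromise n l e := fun e he => funext (hRl e he)
    refine ⟨fun e he γ hγ => ?_, fun e e' he he' => ?_, fun e e' he he' => ?_,
      fun e e' he he' => ?_⟩
    · rw [hRc e he, hRc _ fun j => mul_nonneg hγ (he j)]
      exact scaleInvariant_compromise l e he γ hγ
    · rw [hRc e he, hRc e' he']
      exact downstreamImpartial_compromise l e e' he he'
    · rw [hRc e he, hRc e' he']
      exact upstreamInvariant_compromise l e e' he he'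
    · rw [hRc e he, hRc e' he']
      exact equalTreatment_compromise l e e' he he'
end

section
/- A rule R satisfies scale invariance, downstream impartiality, upstream invariance, and equal treatment of equal upstream total inflow if and only if there is δ ∈ [0,1] with R(e) = δ R^NT(e) + (1-δ) R^EPT(e) for all e, where R^NT(e) = e and R^EPT_i(e) = [1 − (n−i)/(n−1)] e_i + (1/(n−1)) Σ_{k<i} e_k. -/
open Finset

/-! Let `δ` be the share the first agent keeps of a unit inflow. Scale invariance, and downstream
impartiality applied against the zero profile, fix the rule on profiles where only the first agent
has inflow `c`: she keeps `δ c` and everybody else receives `(1 - δ) c / (n - 1)`. For an agent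
`i > 0`, equal treatment of equal upstream total inflow replaces the profile by the one with the
upstream total `S` at the first agent and `e i` at `i`. There upstream invariance gives the agents
before `i` what they get when `e i` is removed, equal treatment gives the agents after `i` what
they get when all of `S + e i` sits at the first agent, and budget balance leaves
`δ e_i + (1 - δ) (i e_i + S) / (n - 1)` for `i`. Conversely, every rule of the form
`R e i = a i * e i + b * ∑ j < i, e j` satisfies the four axioms. -/

section Sums

variable {α M : Type*} [LinearOrder α] [Fintype α] [LocallyFiniteOrderBot α]
  [LocallyFiniteOrderTop α] [AddCommMonoid M]

theorem Finset.sum_Iio_add_sum_Ici (f : α → M) (a : α) :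
    ∑ x ∈ Iio a, f x + ∑ x ∈ Ici a, f x = ∑ x, f x := by
  rw [← sum_union (disjoint_left.2 fun x hx hx' => (mem_Ici.1 hx').not_gt (mem_Iio.1 hx))]
  congr 1
  ext x
  simpa using lt_or_ge x a

@[simp]
theorem Fin.Iio_zero {n : ℕ} [NeZero n] : Iio (0 : Fin n) = ∅ := Iio_bot

end Sums

section Axioms

variable {n : ℕ} {R : (Fin n → ℝ) → (Fin n → ℝ)}

theorem nonneg_single {z : Fin n} {c : ℝ} (hc : 0 ≤ c) : Nonneg n (Pi.single z c) :=
  fun j => by rw [Pi.single_apply]; split_ifs <;> simp [hc]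

theorem IsRule.apply_zero (hR : IsRule n R) (i : Fin n) : R 0 i = 0 := by
  obtain ⟨hpos, -, htotal⟩ := hR 0 fun _ => le_rfl
  simp only [Pi.zero_apply, sum_const_zero] at htotal
  exact (sum_eq_zero_iff_of_nonneg fun j _ => hpos j).1 htotal i (mem_univ i)

theorem IsRule.sum_apply_single (hR : IsRule n R) (z : Fin n) {c : ℝ} (hc : 0 ≤ c) :
    ∑ i, R (Pi.single z c) i = c := by
  rw [(hR _ (nonneg_single hc)).2.2, sum_pi_single', if_pos (mem_univ z)]

theorem ScaleInvariant.apply_single (hSI : ScaleInvariant n R) (z : Fin n) {c : ℝ} (hc : 0 ≤ c)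
    (i : Fin n) : R (Pi.single z c) i = c * R (Pi.single z 1) i := by
  rw [← hSI _ (nonneg_single zero_le_one) c hc i]
  congr 1
  ext j
  rw [Pi.single_apply, Pi.single_apply]
  split_ifs <;> simp

theorem DownstreamImpartial.apply_single_eq (hR : IsRule n R) (hDI : DownstreamImpartial n R)
    {z k l : Fin n} {c : ℝ} (hc : 0 ≤ c) (hk : z < k) (hl : z < l) :
    R (Pi.single z c) k = R (Pi.single z c) l := by
  rcases hc.eq_or_lt with rfl | hc
  · simp only [Pi.single_zero, hR.apply_zero]
  have := hDI 0 (Pi.single z c) (fun _ => le_rfl) (nonneg_single hc.le) z (by simpa using hc)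
    (fun j hj => by simp [hj]) (fun _ _ _ _ => rfl) k l hk hl
  simpa [hR.apply_zero] using this

theorem UpstreamInvariant.apply_add_single (hUI : UpstreamInvariant n R) {e : Fin n → ℝ}
    (he : Nonneg n e) {i k : Fin n} (hki : k < i) {c : ℝ} (hc : 0 ≤ c) :
    R (e + Pi.single i c) k = R e k := by
  rcases hc.eq_or_lt with rfl | hc
  · rw [Pi.single_zero, add_zero]
  exact (hUI e _ he (fun j => add_nonneg (he j) (nonneg_single hc.le j)) i (by simpa using hc)
    (fun j hj => by simp [hj]) k hki).symm

end Axioms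

section Characterization

variable {n : ℕ} [NeZero n] {R : (Fin n → ℝ) → (Fin n → ℝ)}

def keptShare (R : (Fin n → ℝ) → (Fin n → ℝ)) : ℝ := R (Pi.single 0 1) 0

theorem keptShare_nonneg (hR : IsRule n R) : 0 ≤ keptShare R :=
  (hR _ (nonneg_single zero_le_one)).1 0

theorem keptShare_le_one (hR : IsRule n R) : keptShare R ≤ 1 :=
  calc keptShare R ≤ ∑ i, R (Pi.single 0 1) i :=
        single_le_sum (fun i _ => (hR _ (nonneg_single zero_le_one)).1 i) (mem_univ 0)
    _ = 1 := hR.sum_apply_single 0 zero_le_one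

theorem cast_sub_one_ne_zero_of_pos {k : Fin n} (hk : 0 < k) : (n : ℝ) - 1 ≠ 0 := by
  have : 1 < n := by have := k.is_lt; have : 0 < (k : ℕ) := hk; omega
  exact sub_ne_zero.2 (by exact_mod_cast this.ne')

theorem apply_single_zero_of_pos (hR : IsRule n R) (hSI : ScaleInvariant n R)
    (hDI : DownstreamImpartial n R) {c : ℝ} (hc : 0 ≤ c) {k : Fin n} (hk : 0 < k) :
    R (Pi.single 0 c) k = (1 - keptShare R) * c / (n - 1) := by
  have hn := cast_sub_one_ne_zero_of_pos hk
  have hdown : ∑ j ∈ Ioi 0, R (Pi.single 0 c) j = (n - 1) * R (Pi.single 0 c) k := by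
    rw [sum_congr rfl fun j hj => hDI.apply_single_eq hR hc (mem_Ioi.1 hj) hk, sum_const,
      Fin.card_Ioi, nsmul_eq_mul, Fin.val_zero, Nat.sub_zero, Nat.cast_pred (Nat.pos_of_neZero n)]
  have htotal := hR.sum_apply_single 0 hc
  rw [← bot_eq_zero, ← Ici_bot, ← add_sum_Ioi_eq_sum_Ici, bot_eq_zero, hdown,
    hSI.apply_single 0 hc] at htotal
  rw [eq_div_iff hn, keptShare]
  linarith

theorem sum_Ici_apply_single_zero (hR : IsRule n R) (hSI : ScaleInvariant n R)
    (hDI : DownstreamImpartial n R) {c : ℝ} (hc : 0 ≤ c) {i : Fin n} (hi : 0 < i) :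
    ∑ k ∈ Ici i, R (Pi.single 0 c) k = (n - i) * ((1 - keptShare R) * c / (n - 1)) := by
  rw [sum_congr rfl fun k hk =>
      apply_single_zero_of_pos hR hSI hDI hc (hi.trans_le (mem_Ici.1 hk)),
    sum_const, Fin.card_Ici, nsmul_eq_mul, Nat.cast_sub i.is_lt.le]

theorem apply_zero_eq_keptShare_mul (hSI : ScaleInvariant n R)
    (hET : EqualTreatmentOfEqualUpstreamTotalInflow n R) {e : Fin n → ℝ} (he : Nonneg n e) :
    R e 0 = keptShare R * e 0 := by
  rw [hET e (Pi.single 0 (e 0)) he (nonneg_single (he 0)) 0 (by simp) (by simp),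
    hSI.apply_single 0 (he 0), keptShare, mul_comm]

theorem apply_eq_of_pos (hR : IsRule n R) (hSI : ScaleInvariant n R)
    (hDI : DownstreamImpartial n R) (hUI : UpstreamInvariant n R)
    (hET : EqualTreatmentOfEqualUpstreamTotalInflow n R)
    {e : Fin n → ℝ} (he : Nonneg n e) {i : Fin n} (hi : 0 < i) :
    R e i = keptShare R * e i +
      (1 - keptShare R) * (i * e i + ∑ j ∈ Iio i, e j) / (n - 1) := by
  set S := ∑ j ∈ Iio i, e j
  have hS : 0 ≤ S := sum_nonneg fun j _ => he j
  set E : Fin n → ℝ := Pi.single 0 S + Pi.single i (e i)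
  have hE : Nonneg n E := fun j => add_nonneg (nonneg_single hS j) (nonneg_single (he i) j)
  have hsumE (k : Fin n) :
      ∑ j ∈ Iio k, E j = (if 0 < k then S else 0) + if i < k then e i else 0 := by
    simp [E, sum_add_distrib, sum_pi_single']
  have hEi : R e i = R E i := hET e E he hE i (by simp [E, hi.ne']) (by simp [hsumE, hi, S])
  have hup : ∑ k ∈ Iio i, R E k = S - (n - i) * ((1 - keptShare R) * S / (n - 1)) := by
    rw [sum_congr rfl fun k hk => hUI.apply_add_single (nonneg_single hS) (mem_Iio.1 hk) (he i),
      eq_sub_iff_add_eq, ← sum_Ici_apply_single_zero hR hSI hDI hS hi, sum_Iio_add_sum_Ici,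
      hR.sum_apply_single 0 hS]
  have hdown :
      ∑ k ∈ Ioi i, R E k = (n - 1 - i) * ((1 - keptShare R) * (S + e i) / (n - 1)) := by
    have hS' := add_nonneg hS (he i)
    rw [sum_congr rfl fun k hk => ?_, sum_const, Fin.card_Ioi, nsmul_eq_mul]
    · have := i.is_lt
      rw [Nat.cast_sub (by omega), Nat.cast_pred (by omega)]
    have hik := mem_Ioi.1 hk
    rw [hET E (Pi.single 0 (S + e i)) hE (nonneg_single hS') k
        (by simp [E, (hi.trans hik).ne', hik.ne']) (by simp [hsumE, hi.trans hik, hik]),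
      apply_single_zero_of_pos hR hSI hDI hS' (hi.trans hik)]
  have htotal : ∑ k, R E k = S + e i := by
    rw [(hR E hE).2.2]
    simp [E, sum_add_distrib]
  rw [← sum_Iio_add_sum_Ici, ← add_sum_Ioi_eq_sum_Ici, hup, hdown] at htotal
  have hn := cast_sub_one_ne_zero_of_pos hi
  rw [hEi]
  field_simp at htotal ⊢
  linarith

theorem apply_eq_of_axioms (hR : IsRule n R) (hSI : ScaleInvariant n R)
    (hDI : DownstreamImpartial n R) (hUI : UpstreamInvariant n R)
    (hET : EqualTreatmentOfEqualUpstreamTotalInflow n R) {e : Fin n → ℝ} (he : Nonneg n e)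
    (i : Fin n) :
    R e i = keptShare R * e i +
      (1 - keptShare R) * (i * e i + ∑ j ∈ Iio i, e j) / (n - 1) := by
  rcases eq_or_ne i 0 with rfl | hi
  · simp [apply_zero_eq_keptShare_mul hSI hET he]
  · exact apply_eq_of_pos hR hSI hDI hUI hET he ((Fin.pos_iff_ne_zero' i).2 hi)

end Characterization

theorem EPT_eq_div {n : ℕ} (hn : (n : ℝ) - 1 ≠ 0) (e : Fin n → ℝ) (i : Fin n) :
    EPT n e i = (i * e i + ∑ j ∈ Iio i, e j) / (n - 1) := by
  rw [EPT]
  field_simp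
  ring

def IsUpstreamLinear (n : ℕ) (R : (Fin n → ℝ) → (Fin n → ℝ)) (a : Fin n → ℝ) (b : ℝ) :
    Prop :=
  ∀ e : Fin n → ℝ, Nonneg n e → ∀ i, R e i = a i * e i + b * ∑ j ∈ Iio i, e j

namespace IsUpstreamLinear

variable {n : ℕ} {R : (Fin n → ℝ) → (Fin n → ℝ)} {a : Fin n → ℝ} {b : ℝ}

theorem scaleInvariant (h : IsUpstreamLinear n R a b) : ScaleInvariant n R := by
  intro e he γ hγ i
  rw [h _ (fun j => mul_nonneg hγ (he j)), h e he, ← mul_sum]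
  ring

theorem downstreamImpartial (h : IsUpstreamLinear n R a b) : DownstreamImpartial n R := by
  intro e e' he he' i _ hoff _ k l hik hil
  have hdiff (m : Fin n) (him : i < m) : R e' m - R e m = b * (e' i - e i) := by
    have hsum : ∑ j ∈ Iio m, e' j - ∑ j ∈ Iio m, e j = e' i - e i := by
      rw [← sum_sub_distrib,
        sum_eq_single_of_mem i (mem_Iio.2 him) fun j _ hji => by rw [hoff j hji, sub_self]]
    rw [h e' he', h e he, hoff m him.ne']
    linear_combination b * hsum
  rw [hdiff k hik, hdiff l hil]

theorem upstreamInvariant (h : IsUpstreamLinear n R a b) : UpstreamInvariant n R := by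
  intro e e' he he' i _ hoff k hki
  rw [h e he, h e' he', hoff k hki.ne,
    sum_congr rfl fun j hj => hoff j ((mem_Iio.1 hj).trans hki).ne]

theorem equalTreatmentOfEqualUpstreamTotalInflow (h : IsUpstreamLinear n R a b) :
    EqualTreatmentOfEqualUpstreamTotalInflow n R := by
  intro e e' he he' i hi hsum
  rw [h e he, h e' he', hi, hsum]

end IsUpstreamLinear

/-- Theorem 5 in the paper: scale invariance, downstream impartiality,
upstream invariance and equal treatment of equal upstream total inflow characterize the
partial compromise rules `δ R^NT + (1-δ) R^EPT`. -/
theorem partial_compromise_characterization (n : ℕ) (hn : 2 ≤ n)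
    (R : (Fin n → ℝ) → (Fin n → ℝ)) (hR : IsRule n R) :
    (ScaleInvariant n R ∧ DownstreamImpartial n R ∧ UpstreamInvariant n R ∧
      EqualTreatmentOfEqualUpstreamTotalInflow n R) ↔
    (∃ δ : ℝ, 0 ≤ δ ∧ δ ≤ 1 ∧
      ∀ e : Fin n → ℝ, Nonneg n e → ∀ i, R e i = δ * NT n e i + (1 - δ) * EPT n e i) := by
  have : NeZero n := ⟨by omega⟩
  have hn' : (n : ℝ) - 1 ≠ 0 := sub_ne_zero.2 (by exact_mod_cast (by omega : n ≠ 1))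
  constructor
  · rintro ⟨hSI, hDI, hUI, hET⟩
    refine ⟨keptShare R, keptShare_nonneg hR, keptShare_le_one hR, fun e he i => ?_⟩
    rw [apply_eq_of_axioms hR hSI hDI hUI hET he i, NT, EPT_eq_div hn']
    ring
  · rintro ⟨δ, -, -, h⟩
    have hlin : IsUpstreamLinear n R (fun i => δ + (1 - δ) * (1 - (n - 1 - i) / (n - 1)))
        ((1 - δ) * (1 / (n - 1))) := fun e he i => by
      rw [h e he i, NT, EPT]
      ring
    exact ⟨hlin.scaleInvariant, hlin.downstreamImpartial, hlin.upstreamInvariant,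
      hlin.equalTreatmentOfEqualUpstreamTotalInflow⟩
end
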